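/- arXiv:0704.3860 — 3 statements merged into one kernel-verified Lean document; each statement's English description precedes it below -/
import Mathlib

section
/- Suppose H has a finite generating set {h₁, ..., h_k} as a module over A (i.e., finite sums Σ Φ(f_i)h_{j_i} are dense in H), and each h_i is algebraic with respect to T. Then every element of H is algebraic with respect to T, and moreover there exists a single nonzero m ∈ A with Φ(m) = 0. -/
/-!
Let `m` be the product of annihilators `θᵢ` of the generators `hᵢ`; it is nonzero since `A` is a
domain. As `A` is commutative, `Φ m (Φ f hᵢ) = Φ f (Φ m hᵢ) = 0`, so the continuous operator
`Φ m` vanishes on a dense subspace, hence everywhere.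
-/

section Annihilator

variable {A R M : Type*} [CommSemiring A] [Semiring R] [TopologicalSpace M] [AddCommMonoid M]
  [Module R M] [ContinuousAdd M] (Φ : A →+* (M →L[R] M))

theorem RingHom.apply_eq_zero_of_dvd {θ m : A} (hθm : θ ∣ m) {x : M} (hx : Φ θ x = 0) :
    Φ m x = 0 := by
  obtain ⟨c, rfl⟩ := hθm
  rw [mul_comm, map_mul, mul_apply_eq_comp, hx, map_zero]

theorem RingHom.span_orbit_le_ker {ι : Type*} (h : ι → M) {m : A} (hm : ∀ i, Φ m (h i) = 0) :
    Submodule.span R {x : M | ∃ (f : A) (i : ι), x = Φ f (h i)} ≤ (Φ m : M →ₗ[R] M).ker := by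
  rw [Submodule.span_le]
  rintro _ ⟨f, i, rfl⟩
  change Φ m (Φ f (h i)) = 0
  rw [← mul_apply_eq_comp, ← map_mul, mul_comm, map_mul, mul_apply_eq_comp, hm i, map_zero]

theorem RingHom.eq_zero_of_dense_span_orbit [T2Space M] {ι : Type*} (h : ι → M)
    (hgen : Dense (Submodule.span R {x : M | ∃ (f : A) (i : ι), x = Φ f (h i)} : Set M))
    {m : A} (hm : ∀ i, Φ m (h i) = 0) : Φ m = 0 :=
  DFunLike.coe_injective <| Continuous.ext_on hgen (Φ m).continuous (0 : M →L[R] M).continuous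
    fun _ hx ↦ Φ.span_orbit_le_ker h hm hx

end Annihilator

theorem stmt11_general {H : Type*} [NormedAddCommGroup H] [InnerProductSpace ℂ H]
    {A : Type*} [CommRing A] [Algebra ℂ A] [IsDomain A]
    (Φ : A →ₐ[ℂ] (H →L[ℂ] H))
    (k : ℕ) (h : Fin k → H)
    (hgen : Dense ((Submodule.span ℂ
      {x : H | ∃ (f : A) (i : Fin k), x = Φ f (h i)} : Submodule ℂ H) : Set H))
    (halg : ∀ i : Fin k, ∃ θ : A, θ ≠ 0 ∧ Φ θ (h i) = 0) :
    (∀ x : H, ∃ θ : A, θ ≠ 0 ∧ Φ θ x = 0) ∧ ∃ m : A, m ≠ 0 ∧ Φ m = 0 := by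
  choose θ hθ_ne hθ using halg
  have hm_ne : ∏ i, θ i ≠ 0 := Finset.prod_ne_zero_iff.mpr fun i _ ↦ hθ_ne i
  have hm : ∀ i, Φ (∏ j, θ j) (h i) = 0 := fun i ↦
    Φ.toRingHom.apply_eq_zero_of_dvd (Finset.dvd_prod_of_mem θ (Finset.mem_univ i)) (hθ i)
  have hΦm : Φ (∏ j, θ j) = 0 := Φ.toRingHom.eq_zero_of_dense_span_orbit h hgen hm
  exact ⟨fun x ↦ ⟨_, hm_ne, by rw [hΦm, zero_apply]⟩, _, hm_ne, hΦm⟩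

/-- If H has a finite generating set {h₁,...,h_k} over A (finite sums
Σ Φ(fᵢ)hᵢ are dense) and each hᵢ is algebraic, then every element of H is algebraic
and there is a single nonzero m ∈ A with Φ(m) = 0. -/
theorem stmt11 {H : Type*} [NormedAddCommGroup H] [InnerProductSpace ℂ H] [CompleteSpace H]
    {A : Type*} [CommRing A] [Algebra ℂ A] [IsDomain A]
    (Φ : A →ₐ[ℂ] (H →L[ℂ] H))
    (k : ℕ) (h : Fin k → H)
    (hgen : Dense ((Submodule.span ℂ
      {x : H | ∃ (f : A) (i : Fin k), x = Φ f (h i)} : Submodule ℂ H) : Set H))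
    (halg : ∀ i : Fin k, ∃ θ : A, θ ≠ 0 ∧ Φ θ (h i) = 0) :
    (∀ x : H, ∃ θ : A, θ ≠ 0 ∧ Φ θ x = 0) ∧ ∃ m : A, m ≠ 0 ∧ Φ m = 0 :=
  stmt11_general Φ k h hgen halg
end

section
/- If B, the set of algebraic elements with respect to T, is a closed subspace and the operators Φ_B(θ) on H/B are defined by Φ_B(θ)[h] = [Φ(θ)h], then every nonzero element [a] of H/B is transcendental with respect to T_B: Φ_B(θ)[a] ≠ 0 for all nonzero θ ∈ A. -/
theorem exists_ne_zero_apply_eq_zero_of_apply {A R M : Type*} [MonoidWithZero A] [NoZeroDivisors A]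
    [Semiring R] [TopologicalSpace M] [AddCommMonoid M] [Module R M]
    (Φ : A →* (M →L[R] M)) {θ : A} (hθ : θ ≠ 0) {a : M}
    (h : ∃ θ' : A, θ' ≠ 0 ∧ Φ θ' (Φ θ a) = 0) :
    ∃ θ' : A, θ' ≠ 0 ∧ Φ θ' a = 0 := by
  obtain ⟨θ', hθ', hzero⟩ := h
  exact ⟨θ' * θ, mul_ne_zero hθ' hθ, by rw [map_mul]; exact hzero⟩

theorem stmt16_general {H : Type*} [NormedAddCommGroup H] [InnerProductSpace ℂ H]
    {A : Type*} [CommRing A] [Algebra ℂ A] [IsDomain A]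
    (Φ : A →ₐ[ℂ] (H →L[ℂ] H)) (B : Submodule ℂ H)
    (hB : (B : Set H) = {h : H | ∃ θ : A, θ ≠ 0 ∧ Φ θ h = 0})
    (hinv : ∀ θ : A, B ≤ B.comap (Φ θ).toLinearMap)
    (a : H) (ha : B.mkQ a ≠ 0) (θ : A) (hθ : θ ≠ 0) :
    B.mapQ B (Φ θ).toLinearMap (hinv θ) (B.mkQ a) ≠ 0 := by
  intro h
  have hΦa : Φ θ a ∈ (B : Set H) := (Submodule.Quotient.mk_eq_zero B).1 h
  have hs : a ∈ (B : Set H) := by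
    rw [hB] at hΦa ⊢
    exact exists_ne_zero_apply_eq_zero_of_apply Φ.toMonoidHom hθ hΦa
  exact ha ((Submodule.Quotient.mk_eq_zero B).2 hs)

/-- If B (the algebraic elements) is a closed subspace, then every nonzero
element [a] of H/B is transcendental with respect to the quotient operators:
Φ_B(θ)[a] ≠ 0 for every nonzero θ ∈ A. -/
theorem stmt16 {H : Type*} [NormedAddCommGroup H] [InnerProductSpace ℂ H] [CompleteSpace H]
    {A : Type*} [CommRing A] [Algebra ℂ A] [IsDomain A]
    (Φ : A →ₐ[ℂ] (H →L[ℂ] H)) (B : Submodule ℂ H)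
    (hB : (B : Set H) = {h : H | ∃ θ : A, θ ≠ 0 ∧ Φ θ h = 0})
    (hcl : IsClosed (B : Set H))
    (hinv : ∀ θ : A, B ≤ B.comap (Φ θ).toLinearMap)
    (a : H) (ha : B.mkQ a ≠ 0) (θ : A) (hθ : θ ≠ 0) :
    B.mapQ B (Φ θ).toLinearMap (hinv θ) (B.mkQ a) ≠ 0 :=
  stmt16_general Φ B hB hinv a ha θ hθ
end

section
/- Let M ⊆ B be a closed subspace invariant under every Φ(u), u ∈ A. Then for a ∈ H, the class [a] ∈ H/M satisfies Φ_M(θ)[a] = 0 for some nonzero θ ∈ A if and only if a is algebraic with respect to T. -/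
/-! The class of `a` is killed by `Φ_M(θ)` exactly when `Φ θ a ∈ M`. Every element of `M` is
algebraic, so some `θ' ≠ 0` kills `Φ θ a`, and then `θ' * θ ≠ 0` kills `a` because `A` has no
zero divisors. -/

section AlgebraicVector

variable {A R H F : Type*} [MonoidWithZero A] [Semiring R] [TopologicalSpace H]
  [AddCommMonoid H] [Module R H] [FunLike F A (H →L[R] H)] [MonoidHomClass F A (H →L[R] H)]

def IsAlgebraicVector (Φ : F) (h : H) : Prop :=
  ∃ θ : A, θ ≠ 0 ∧ Φ θ h = 0

theorem IsAlgebraicVector.of_apply [NoZeroDivisors A] {Φ : F} {θ : A} {h : H} (hθ : θ ≠ 0)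
    (halg : IsAlgebraicVector Φ (Φ θ h)) : IsAlgebraicVector Φ h := by
  obtain ⟨θ', hθ', hkill⟩ := halg
  exact ⟨θ' * θ, mul_ne_zero hθ' hθ, by rw [map_mul]; exact hkill⟩

end AlgebraicVector

theorem Submodule.mapQ_mkQ_eq_zero_iff {R M N : Type*} [Ring R] [AddCommGroup M] [Module R M]
    [AddCommGroup N] [Module R N] (p : Submodule R M) (q : Submodule R N) (f : M →ₗ[R] N)
    (hf : p ≤ q.comap f) (x : M) : p.mapQ q f hf (p.mkQ x) = 0 ↔ f x ∈ q := by
  rw [mkQ_apply, mapQ_apply, Quotient.mk_eq_zero]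

theorem stmt17_general {H : Type*} [NormedAddCommGroup H] [InnerProductSpace ℂ H]
    {A : Type*} [CommRing A] [Algebra ℂ A] [IsDomain A]
    (Φ : A →ₐ[ℂ] (H →L[ℂ] H)) (M : Submodule ℂ H)
    (hinv : ∀ u : A, M ≤ M.comap (Φ u).toLinearMap)
    (hMB : ∀ x ∈ M, ∃ θ : A, θ ≠ 0 ∧ Φ θ x = 0)
    (a : H) :
    (∃ θ : A, θ ≠ 0 ∧ M.mapQ M (Φ θ).toLinearMap (hinv θ) (M.mkQ a) = 0) ↔
      ∃ θ : A, θ ≠ 0 ∧ Φ θ a = 0 := by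
  simp only [Submodule.mapQ_mkQ_eq_zero_iff, ContinuousLinearMap.coe_coe]
  constructor
  · rintro ⟨θ, hθ, hmem⟩
    exact IsAlgebraicVector.of_apply hθ (hMB _ hmem)
  · rintro ⟨θ, hθ, hkill⟩
    exact ⟨θ, hθ, hkill ▸ M.zero_mem⟩

/-- If M ⊆ B is a closed Φ-invariant subspace, then [a] ∈ H/M is annihilated
by Φ_M(θ) for some nonzero θ iff a is algebraic with respect to T. -/
theorem stmt17 {H : Type*} [NormedAddCommGroup H] [InnerProductSpace ℂ H] [CompleteSpace H]
    {A : Type*} [CommRing A] [Algebra ℂ A] [IsDomain A]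
    (Φ : A →ₐ[ℂ] (H →L[ℂ] H)) (M : Submodule ℂ H)
    (hcl : IsClosed (M : Set H))
    (hinv : ∀ u : A, M ≤ M.comap (Φ u).toLinearMap)
    (hMB : ∀ x ∈ M, ∃ θ : A, θ ≠ 0 ∧ Φ θ x = 0)
    (a : H) :
    (∃ θ : A, θ ≠ 0 ∧ M.mapQ M (Φ θ).toLinearMap (hinv θ) (M.mkQ a) = 0) ↔
      ∃ θ : A, θ ≠ 0 ∧ Φ θ a = 0 :=
  stmt17_general Φ M hinv hMB a
end
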